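/- For all 0 ≤ s ≤ t ≤ 1, ξ ∈ ℝ, r > 0 and ε ∈ [0,1], one has |γ_{s,t}(ξ,r)| ≤ C |t−s|^ε (r^{2ε} + |ξ|^ε) / √(r⁴ + ξ²) for a universal constant C. -/

import Mathlib

/-! With `γ_t = (e^{iξt} - e^{-r²t}) / (r² + iξ)`, the increment `γ_t - γ_s` is the difference of the
increments of `u ↦ e^{zu}` for `z = iξ` and `z = -r²`, divided by `|r² + iξ| = √(r⁴ + ξ²)`.
Since `Re z ≤ 0`, such an increment is bounded both by `2` and, by the mean value theorem,
by `|z| (t - s)`; interpolating, `min 2 x ≤ 2 x^ε`. -/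

open MeasureTheory

noncomputable def gammaH (t ξ r : ℝ) : ℂ :=
  Complex.exp (Complex.I * ξ * t) *
    ∫ s in (0:ℝ)..t, Complex.exp (-(s:ℂ) * (r:ℂ)^2) * Complex.exp (-Complex.I * ξ * s)

open Complex

lemma min_le_mul_rpow {A x ε : ℝ} (hA : 1 ≤ A) (hx : 0 ≤ x) (hε0 : 0 ≤ ε) (hε1 : ε ≤ 1) :
    min A x ≤ A * x ^ ε := by
  rcases le_total x 1 with hx1 | hx1
  · calc min A x ≤ x := min_le_right _ _
      _ ≤ x ^ ε := Real.self_le_rpow_of_le_one hx hx1 hε1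
      _ ≤ A * x ^ ε := le_mul_of_one_le_left (by positivity) hA
  · calc min A x ≤ A := min_le_left _ _
      _ ≤ A * x ^ ε := le_mul_of_one_le_right (by linarith) (Real.one_le_rpow hx1 hε0)

lemma norm_cexp_mul_le_one {z : ℂ} (hz : z.re ≤ 0) {u : ℝ} (hu : 0 ≤ u) : ‖exp (z * u)‖ ≤ 1 := by
  rw [norm_exp, Real.exp_le_one_iff, re_mul_ofReal]
  exact mul_nonpos_of_nonpos_of_nonneg hz hu

lemma norm_cexp_mul_sub_cexp_mul_le {z : ℂ} (hz : z.re ≤ 0) {s t : ℝ} (hs : 0 ≤ s)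
    (hst : s ≤ t) : ‖exp (z * t) - exp (z * s)‖ ≤ min 2 (‖z‖ * (t - s)) := by
  have hexp_le (u : ℝ) (hu : s ≤ u) : ‖exp (z * u)‖ ≤ 1 := norm_cexp_mul_le_one hz (hs.trans hu)
  refine le_min ?_ ?_
  · calc ‖exp (z * t) - exp (z * s)‖ ≤ ‖exp (z * t)‖ + ‖exp (z * s)‖ := norm_sub_le _ _
      _ ≤ 1 + 1 := add_le_add (hexp_le t hst) (hexp_le s le_rfl)
      _ = 2 := one_add_one_eq_two
  · have hderiv (u : ℝ) : HasDerivAt (fun u : ℝ ↦ exp (z * u)) (exp (z * u) * z) u := by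
      simpa using ((hasDerivAt_id (u : ℂ)).const_mul z).cexp.comp_ofReal
    refine norm_image_sub_le_of_norm_deriv_le_segment' (f := fun u : ℝ ↦ exp (z * u))
      (fun u _ ↦ (hderiv u).hasDerivWithinAt) (fun u hu ↦ ?_) t ⟨hst, le_rfl⟩
    rw [norm_mul]
    exact mul_le_of_le_one_left (norm_nonneg z) (hexp_le u hu.1)

lemma gammaH_eq_div (t ξ : ℝ) {r : ℝ} (hr : r ≠ 0) :
    gammaH t ξ r = (exp (I * ξ * t) - exp (-(r : ℂ) ^ 2 * t)) / ((r : ℂ) ^ 2 + I * ξ) := by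
  have hne : (r : ℂ) ^ 2 + I * ξ ≠ 0 := by
    intro h
    exact hr (by simpa [← ofReal_pow] using congrArg re h)
  have hne' : -((r : ℂ) ^ 2 + I * ξ) ≠ 0 := neg_ne_zero.mpr hne
  have hint (s : ℝ) :
      exp (-(s : ℂ) * r ^ 2) * exp (-I * ξ * s) = exp (-((r : ℂ) ^ 2 + I * ξ) * s) := by
    rw [← exp_add]; ring_nf
  unfold gammaH
  rw [intervalIntegral.integral_congr (fun s _ ↦ hint s), integral_exp_mul_complex hne']
  have hexp : exp (I * ξ * t) * exp (-((r : ℂ) ^ 2 + I * ξ) * t) = exp (-(r : ℂ) ^ 2 * t) := by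
    rw [← exp_add]; ring_nf
  rw [ofReal_zero, mul_zero, exp_zero, mul_div_assoc', div_eq_div_iff hne' hne]
  linear_combination ((r : ℂ) ^ 2 + I * ξ) * hexp

lemma norm_sq_add_I_mul (r ξ : ℝ) : ‖(r : ℂ) ^ 2 + I * ξ‖ = √(r ^ 4 + ξ ^ 2) := by
  rw [← ofReal_pow, mul_comm, norm_add_mul_I]
  ring_nf

theorem stmt3 :
    ∃ C : ℝ, 0 < C ∧ ∀ s t ξ r ε : ℝ, 0 ≤ s → s ≤ t → t ≤ 1 → 0 < r → 0 ≤ ε → ε ≤ 1 →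
      ‖gammaH t ξ r - gammaH s ξ r‖ ≤
        C * (|t - s| ^ ε * (r ^ (2*ε) + |ξ| ^ ε) / Real.sqrt (r^4 + ξ^2)) := by
  refine ⟨2, two_pos, fun s t ξ r ε hs hst _ hr hε0 hε1 ↦ ?_⟩
  have hd : 0 ≤ t - s := sub_nonneg.mpr hst
  have hosc := (norm_cexp_mul_sub_cexp_mul_le (z := I * ξ) (by simp) hs hst).trans
    (min_le_mul_rpow one_le_two (by positivity) hε0 hε1)
  have hdiss := (norm_cexp_mul_sub_cexp_mul_le (z := -(r : ℂ) ^ 2)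
    (by simp [← ofReal_pow, sq_nonneg]) hs hst).trans
    (min_le_mul_rpow one_le_two (by positivity) hε0 hε1)
  have hsplit : gammaH t ξ r - gammaH s ξ r = ((exp (I * ξ * t) - exp (I * ξ * s)) -
      (exp (-(r : ℂ) ^ 2 * t) - exp (-(r : ℂ) ^ 2 * s))) / ((r : ℂ) ^ 2 + I * ξ) := by
    rw [gammaH_eq_div t ξ hr.ne', gammaH_eq_div s ξ hr.ne']
    ring
  rw [hsplit, norm_div, norm_sq_add_I_mul, abs_of_nonneg hd, mul_div_assoc']
  gcongr
  calc _ ≤ _ := norm_sub_le _ _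
    _ ≤ 2 * (|ξ| * (t - s)) ^ ε + 2 * (r ^ 2 * (t - s)) ^ ε := by
      simpa [← ofReal_pow] using add_le_add hosc hdiss
    _ = 2 * ((t - s) ^ ε * (r ^ (2 * ε) + |ξ| ^ ε)) := by
      rw [Real.mul_rpow (abs_nonneg ξ) hd, Real.mul_rpow (sq_nonneg r) hd,
        ← Real.rpow_natCast_mul hr.le]
      push_cast
      ring
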